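/- Let g, K, χ, N, s, b be integers with g ≥ 2. Assume the Noether-type relation 12·χ = K + N, the Xiao slope inequality g·K ≥ 4·(g−1)·χ, and the strict canonical class inequality K < 2·(g−1)·(s + 2·b − 2). Then N < (4·g + 2)·(s + 2·b − 2). -/
import Mathlib

theorem stmt_0 (g K χ N s b : ℤ) (hg : g ≥ 2)
    (hNoether : 12 * χ = K + N)
    (hXiao : g * K ≥ 4 * (g - 1) * χ)
    (hTan : K < 2 * (g - 1) * (s + 2 * b - 2)) :
    N < (4 * g + 2) * (s + 2 * b - 2) := by
  nlinarith [mul_pos (by linarith : (0:ℤ) < g - 1) (by linarith : 2 * (g - 1) * (s + 2 * b - 2) - K > 0), mul_lt_mul_of_pos_left hTan (by linarith : (0:ℤ) < 2*g+1)]
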